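/- Let G be a d-regular finite simple undirected graph on n vertices (d ≥ 1), let S and S′ be two sets of vertices with |S| = |S′| = k, and let η and η′ solve the McAvoy–Allen system for S and S′ respectively. If a(S) ≤ a(S′), then (1/(2d²n²)) · Σ_{u,v ∈ V} |N(u) ∩ N(v)| · η(u,v) ≥ (1/(2d²n²)) · Σ_{u,v ∈ V} |N(u) ∩ N(v)| · η′(u,v); that is, the constant c(G,S) of the weak-selection expansion is at least c(G,S′). -/

import Mathlib

open Finset

variable {V : Type*}

/-- Number of active edges: edges with exactly one endpoint in `S`. -/
def activeCount [Fintype V] [DecidableEq V] (G : SimpleGraph V) [DecidableRel G.Adj]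
    (S : Finset V) : ℕ :=
  (G.edgeFinset.filter (fun e =>
    Sym2.lift ⟨fun u v => xor (decide (u ∈ S)) (decide (v ∈ S)),
      fun u v => Bool.xor_comm _ _⟩ e = true)).card

/-- `η` solves the McAvoy–Allen system for `S` on a `d`-regular graph `G`. -/
def MASolves [Fintype V] [DecidableEq V] (G : SimpleGraph V) [DecidableRel G.Adj]
    (d : ℕ) (S : Finset V) (η : V → V → ℝ) : Prop :=
  (∀ u, η u u = 0) ∧
  ∀ u v, u ≠ v →
    η u v = ((Fintype.card V : ℝ) / 2) *
        |(if u ∈ S then (1 : ℝ) else 0) - (if v ∈ S then (1 : ℝ) else 0)|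
      + (1 / (2 * (d : ℝ))) *
        ((∑ w ∈ G.neighborFinset u, η w v) + (∑ w ∈ G.neighborFinset v, η u w))

/-!
Multiply the McAvoy–Allen equation by `2d` and let `D(u,v)` (`maDefect`) be the difference of
its sides. Summed over all ordered pairs, regularity makes the neighbour sums cancel the `2dη`
term, leaving `∑ D = -2dn k (n - k)`. But `D` vanishes off the diagonal and
`D(u,u) = -∑_{w ~ u} (η(w,u) + η(u,w))`, so `E = ∑_{u ~ v} η(u,v)` equals `dn k (n - k)`.
Summed over adjacent pairs, where `D` vanishes, both neighbour sums become
`T = ∑_{u,v} |N(u) ∩ N(v)| η(u,v)`, so `0 = 2dE - 2dn a(S) - 2T`. Hence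
`T = d (dn k (n - k) - n a(S))`, i.e. `c(G,S) = k (n - k) / (2n) - a(S) / (2dn)`, which decreases
in `a(S)`.
-/

namespace SimpleGraph

section

variable [Fintype V] (G : SimpleGraph V) [DecidableRel G.Adj] {M : Type*} [AddCommMonoid M]

theorem sum_sum_neighborFinset_comm (f : V → V → M) :
    ∑ u, ∑ w ∈ G.neighborFinset u, f u w = ∑ w, ∑ u ∈ G.neighborFinset w, f u w :=
  Finset.sum_comm' fun _ _ => by simp [G.adj_comm]

theorem IsRegularOfDegree.sum_sum_neighborFinset {G : SimpleGraph V} [DecidableRel G.Adj]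
    {d : ℕ} (hreg : G.IsRegularOfDegree d) (f : V → M) :
    ∑ u, ∑ w ∈ G.neighborFinset u, f w = d • ∑ w, f w := by
  rw [sum_sum_neighborFinset_comm G (fun _ w => f w), Finset.smul_sum]
  simp [hreg.degree_eq]

theorem sum_sum_neighborFinset_eq_two_nsmul_sum_edgeFinset [DecidableEq V] (f : Sym2 V → M) :
    ∑ u, ∑ v ∈ G.neighborFinset u, f s(u, v) = 2 • ∑ e ∈ G.edgeFinset, f e := by
  calc ∑ u, ∑ v ∈ G.neighborFinset u, f s(u, v)
      = ∑ u, ∑ d : G.Dart with d.fst = u, f d.edge := by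
        refine Finset.sum_congr rfl fun u _ => ?_
        rw [dart_fst_fiber, Finset.sum_image fun _ _ _ _ h => G.dartOfNeighborSet_injective u h]
        exact Finset.sum_subtype _ (by simp) _
    _ = ∑ e ∈ G.edgeFinset, ∑ d : G.Dart with d.edge = e, f d.edge := by
        rw [Finset.sum_fiberwise, Finset.sum_fiberwise_of_maps_to fun d _ => by simp]
    _ = 2 • ∑ e ∈ G.edgeFinset, f e := by
        rw [Finset.smul_sum]
        refine Finset.sum_congr rfl fun e he => ?_
        rw [Finset.sum_congr rfl fun d hd => congrArg f (Finset.mem_filter.1 hd).2,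
          Finset.sum_const, G.dart_edge_fiber_card e (mem_edgeFinset.1 he)]

end

theorem sum_sum_card_inter_neighborFinset_mul [Fintype V] [DecidableEq V] (G : SimpleGraph V)
    [DecidableRel G.Adj] {R : Type*} [NonAssocSemiring R] (f : V → V → R) :
    ∑ u, ∑ v, (#(G.neighborFinset u ∩ G.neighborFinset v) : R) * f u v
      = ∑ w, ∑ u ∈ G.neighborFinset w, ∑ v ∈ G.neighborFinset w, f u v := by
  calc ∑ u, ∑ v, (#(G.neighborFinset u ∩ G.neighborFinset v) : R) * f u v
      = ∑ u, ∑ v, ∑ w ∈ G.neighborFinset u ∩ G.neighborFinset v, f u v := by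
        simp only [Finset.sum_const, nsmul_eq_mul]
    _ = ∑ u, ∑ w ∈ G.neighborFinset u, ∑ v ∈ G.neighborFinset w, f u v :=
        Finset.sum_congr rfl fun u _ => Finset.sum_comm' fun _ _ => by simp [G.adj_comm, and_comm]
    _ = _ := G.sum_sum_neighborFinset_comm fun u w => ∑ v ∈ G.neighborFinset w, f u v

end SimpleGraph

section Cut

variable [Fintype V] [DecidableEq V] (S : Finset V)

theorem sum_sum_abs_ite_mem_sub_ite_mem :
    ∑ u : V, ∑ v : V, |(if u ∈ S then (1 : ℝ) else 0) - (if v ∈ S then (1 : ℝ) else 0)|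
      = 2 * #S * (Fintype.card V - #S) := by
  have habs : ∀ u v : V,
      |(if u ∈ S then (1 : ℝ) else 0) - (if v ∈ S then (1 : ℝ) else 0)|
        = (if u ∈ S then 1 else 0) + (if v ∈ S then 1 else 0)
          - 2 * ((if u ∈ S then 1 else 0) * (if v ∈ S then 1 else 0)) := by
    intro u v
    split_ifs <;> norm_num
  simp only [habs, Finset.sum_sub_distrib, Finset.sum_add_distrib, ← Finset.mul_sum,
    ← Finset.sum_mul, Finset.sum_const, Finset.card_univ, nsmul_eq_mul, Finset.sum_ite_mem,
    Finset.univ_inter, mul_one]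
  ring

theorem sum_sum_neighborFinset_abs_ite_mem_sub_ite_mem (G : SimpleGraph V) [DecidableRel G.Adj] :
    ∑ u, ∑ v ∈ G.neighborFinset u,
        |(if u ∈ S then (1 : ℝ) else 0) - (if v ∈ S then (1 : ℝ) else 0)|
      = 2 * activeCount G S := by
  rw [activeCount, Finset.card_filter, Nat.cast_sum, ← Nat.ofNat_nsmul_eq_mul,
    ← G.sum_sum_neighborFinset_eq_two_nsmul_sum_edgeFinset]
  refine Finset.sum_congr rfl fun u _ => Finset.sum_congr rfl fun v _ => ?_
  by_cases hu : u ∈ S <;> by_cases hv : v ∈ S <;> simp [hu, hv]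

end Cut

section McAvoyAllen

variable [Fintype V] [DecidableEq V] (G : SimpleGraph V) [DecidableRel G.Adj]
  (d : ℕ) (S : Finset V) (η : V → V → ℝ)

def maDefect (u v : V) : ℝ :=
  2 * d * η u v - d * Fintype.card V *
      |(if u ∈ S then (1 : ℝ) else 0) - (if v ∈ S then (1 : ℝ) else 0)|
    - (∑ w ∈ G.neighborFinset u, η w v + ∑ w ∈ G.neighborFinset v, η u w)

variable {G d S η}

theorem MASolves.maDefect_eq_zero (hd : d ≠ 0) (h : MASolves G d S η) {u v : V}
    (huv : u ≠ v) :
    maDefect G d S η u v = 0 := by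
  rw [maDefect, h.2 u v huv]
  field_simp
  ring

theorem MASolves.maDefect_self (h : MASolves G d S η) (u : V) :
    maDefect G d S η u u = -∑ w ∈ G.neighborFinset u, (η w u + η u w) := by
  simp [maDefect, h.1 u, Finset.sum_add_distrib]

theorem SimpleGraph.IsRegularOfDegree.sum_sum_maDefect (hreg : G.IsRegularOfDegree d) :
    ∑ u, ∑ v, maDefect G d S η u v
      = -(2 * d * Fintype.card V * #S * (Fintype.card V - #S)) := by
  have hleft : ∑ u, ∑ v, ∑ w ∈ G.neighborFinset u, η w v = d * ∑ u, ∑ v, η u v := by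
    rw [Finset.sum_comm, Finset.sum_comm (f := η), Finset.mul_sum]
    exact Finset.sum_congr rfl fun v _ => by
      rw [hreg.sum_sum_neighborFinset fun w => η w v, nsmul_eq_mul]
  have hright : ∑ u, ∑ v, ∑ w ∈ G.neighborFinset v, η u w = d * ∑ u, ∑ v, η u v := by
    rw [Finset.mul_sum]
    exact Finset.sum_congr rfl fun u _ => by rw [hreg.sum_sum_neighborFinset (η u), nsmul_eq_mul]
  simp only [maDefect, Finset.sum_sub_distrib, Finset.sum_add_distrib, ← Finset.mul_sum,
    sum_sum_abs_ite_mem_sub_ite_mem, hleft, hright]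
  ring

theorem sum_sum_neighborFinset_maDefect :
    ∑ u, ∑ v ∈ G.neighborFinset u, maDefect G d S η u v
      = 2 * d * ∑ u, ∑ v ∈ G.neighborFinset u, η u v
        - 2 * d * Fintype.card V * activeCount G S
        - 2 * ∑ u, ∑ v, (#(G.neighborFinset u ∩ G.neighborFinset v) : ℝ) * η u v := by
  have hleft : ∑ u, ∑ v ∈ G.neighborFinset u, ∑ w ∈ G.neighborFinset u, η w v
      = ∑ u, ∑ v, (#(G.neighborFinset u ∩ G.neighborFinset v) : ℝ) * η u v := by
    rw [G.sum_sum_card_inter_neighborFinset_mul]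
    exact Finset.sum_congr rfl fun _ _ => Finset.sum_comm
  have hright : ∑ u, ∑ v ∈ G.neighborFinset u, ∑ w ∈ G.neighborFinset v, η u w
      = ∑ u, ∑ v, (#(G.neighborFinset u ∩ G.neighborFinset v) : ℝ) * η u v := by
    rw [G.sum_sum_card_inter_neighborFinset_mul,
      G.sum_sum_neighborFinset_comm fun u v => ∑ w ∈ G.neighborFinset v, η u w]
  simp only [maDefect, Finset.sum_sub_distrib, Finset.sum_add_distrib, ← Finset.mul_sum,
    sum_sum_neighborFinset_abs_ite_mem_sub_ite_mem, hleft, hright]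
  ring

theorem MASolves.sum_sum_neighborFinset (hd : d ≠ 0) (hreg : G.IsRegularOfDegree d)
    (h : MASolves G d S η) :
    ∑ u, ∑ v ∈ G.neighborFinset u, η u v
      = d * Fintype.card V * #S * (Fintype.card V - #S) := by
  have hdiag : ∑ u, ∑ v, maDefect G d S η u v = ∑ u, maDefect G d S η u u :=
    Finset.sum_congr rfl fun u _ => Finset.sum_eq_single u
      (fun v _ hvu => h.maDefect_eq_zero hd hvu.symm) (by simp)
  have hswap :
      ∑ u, ∑ w ∈ G.neighborFinset u, η w u = ∑ u, ∑ v ∈ G.neighborFinset u, η u v :=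
    G.sum_sum_neighborFinset_comm fun u w => η w u
  rw [hreg.sum_sum_maDefect] at hdiag
  simp only [h.maDefect_self, Finset.sum_neg_distrib, Finset.sum_add_distrib, hswap] at hdiag
  linarith

theorem MASolves.sum_sum_card_inter_neighborFinset_mul (hd : d ≠ 0)
    (hreg : G.IsRegularOfDegree d) (h : MASolves G d S η) :
    ∑ u, ∑ v, (#(G.neighborFinset u ∩ G.neighborFinset v) : ℝ) * η u v
      = d * (d * Fintype.card V * #S * (Fintype.card V - #S)
        - Fintype.card V * activeCount G S) := by
  have hedges : ∑ u, ∑ v ∈ G.neighborFinset u, maDefect G d S η u v = 0 :=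
    Finset.sum_eq_zero fun u _ => Finset.sum_eq_zero fun v hv =>
      h.maDefect_eq_zero hd (G.ne_of_adj ((G.mem_neighborFinset u v).1 hv))
  rw [sum_sum_neighborFinset_maDefect, h.sum_sum_neighborFinset hd hreg] at hedges
  linarith

end McAvoyAllen

theorem constant_antitone_in_active_edges [Fintype V] [DecidableEq V]
    (G : SimpleGraph V) [DecidableRel G.Adj]
    (d k : ℕ) (hd : 1 ≤ d) (hreg : G.IsRegularOfDegree d)
    (S S' : Finset V) (hk : S.card = k) (hk' : S'.card = k)
    (η η' : V → V → ℝ) (hη : MASolves G d S η) (hη' : MASolves G d S' η')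
    (ha : activeCount G S ≤ activeCount G S') :
    (1 / (2 * (d : ℝ) ^ 2 * (Fintype.card V : ℝ) ^ 2)) *
      ∑ u : V, ∑ v : V, ((G.neighborFinset u ∩ G.neighborFinset v).card : ℝ) * η u v
    ≥ (1 / (2 * (d : ℝ) ^ 2 * (Fintype.card V : ℝ) ^ 2)) *
      ∑ u : V, ∑ v : V, ((G.neighborFinset u ∩ G.neighborFinset v).card : ℝ) * η' u v := by
  have hd0 : d ≠ 0 := Nat.one_le_iff_ne_zero.mp hd
  rw [hη.sum_sum_card_inter_neighborFinset_mul hd0 hreg,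
    hη'.sum_sum_card_inter_neighborFinset_mul hd0 hreg, hk, hk']
  gcongr
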